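/- arXiv:math/0602098 — 3 statements merged into one kernel-verified Lean document; each statement's English description precedes it below -/
import Mathlib

section
/- Assume that no proper subgroup of ℤ^d contains P = {u ∈ ℤ^d : p(u) > 0}. If α : ℤ^d → (0,1) is such that ν_α is stationary for the translation-invariant exclusion process on ℤ^d, then there exists v ∈ ℝ^d such that π(x) = π(0)·e^{⟨x,v⟩} for all x ∈ ℤ^d. -/
open MeasureTheory Filter Topology

namespace ExclusionPaper

abbrev Zd (d : ℕ) := Fin d → ℤ

abbrev Conf (d : ℕ) := Zd d → Bool

noncomputable def ind (b : Bool) : ℝ := if b then 1 else 0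

def swap {d : ℕ} (η : Conf d) (x y : Zd d) : Conf d :=
  fun z => if z = x then η y else if z = y then η x else η z

def IsCylinder {d : ℕ} (f : Conf d → ℝ) : Prop :=
  ∃ F : Finset (Zd d), ∀ η η' : Conf d, (∀ x ∈ F, η x = η' x) → f η = f η'

noncomputable def gen {d : ℕ} (p : Zd d → ℝ) (f : Conf d → ℝ) (η : Conf d) : ℝ :=
  ∑' x : Zd d, ∑' y : Zd d,
    p (y - x) * ind (η x) * (1 - ind (η y)) * (f (swap η x y) - f η)

def IsStationary {d : ℕ} (p : Zd d → ℝ) (μ : Measure (Conf d)) : Prop :=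
  ∀ f : Conf d → ℝ, IsCylinder f → ∫ η, gen p f η ∂μ = 0

def IsProductWith {d : ℕ} (α : Zd d → ℝ) (μ : Measure (Conf d)) : Prop :=
  IsProbabilityMeasure μ ∧
  ∀ F : Finset (Zd d), ∀ b : Zd d → Bool,
    μ {η : Conf d | ∀ x ∈ F, η x = b x} =
      ∏ x ∈ F, ENNReal.ofReal (if b x then α x else 1 - α x)

noncomputable def pifun {d : ℕ} (α : Zd d → ℝ) (x : Zd d) : ℝ := α x / (1 - α x)

def innerZ {d : ℕ} (x y : Zd d) : ℤ := ∑ i, x i * y i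

noncomputable def innerR {d : ℕ} (x : Zd d) (v : Fin d → ℝ) : ℝ := ∑ i, (x i : ℝ) * v i

/-!
Testing stationarity against the centred two-site function `(η a - α a) * (η b - α b)`, every
jump except `a → b` and `b → a` has zero expected effect (the product measure makes the remaining
centred factor independent of the jump), so `p (b - a) π a = p (a - b) π b` whenever
`α a ≠ α b`. Testing against `η a` says that the flux into `a` balances the flux out of `a`.

Put `φ = log π`. Detailed balance across steps forces every increment `φ (a + u) - φ a` to be `0`
or `log (p u / p (-u))`, and with it flux balance says that `φ` is harmonic for the weights
`w u = logMean (p u) (p (-u))`. For `p z > 0` the increment `b ↦ φ (b + z) - φ b` is then a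
two-valued harmonic function, hence, by the maximum principle, invariant under every direction
with `w t > 0`; along the other directions of positive `p` the function `φ` itself is constant.
As these directions generate `ℤ^d`, all increments of `φ` are constant and `φ` is affine.
-/

section Generation

variable {G : Type*} [AddGroup G] {S : Set G}

theorem eq_apply_zero_of_forall_periodic {β : Type*} (hS : AddSubgroup.closure S = ⊤)
    {f : G → β} (hf : ∀ t ∈ S, Function.Periodic f t) (b : G) : f b = f 0 := by
  have key : ∀ t ∈ AddSubgroup.closure S, Function.Periodic f t := by
    intro t ht
    induction ht using AddSubgroup.closure_induction with
    | mem t ht => exact hf t ht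
    | zero => simp [Function.Periodic]
    | add x y _ _ hx hy => exact hx.add_period hy
    | neg x _ hx => exact hx.neg
  simpa using key b (hS ▸ AddSubgroup.mem_top b) 0

theorem exists_addMonoidHom_of_increment_eq (hS : AddSubgroup.closure S = ⊤) {φ : G → ℝ}
    (hφ : ∀ u ∈ S, ∀ b, φ (b + u) - φ b = φ u - φ 0) :
    ∃ ψ : G →+ ℝ, ∀ x, φ x = φ 0 + ψ x := by
  have key : ∀ u ∈ AddSubgroup.closure S, ∀ b, φ (b + u) - φ b = φ u - φ 0 := by
    intro u hu
    induction hu using AddSubgroup.closure_induction with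
    | mem u hu => exact hφ u hu
    | zero => simp
    | add x y _ _ hx hy =>
      intro b
      rw [← add_assoc]
      linarith [hx b, hy (b + x), hy x]
    | neg x _ hx =>
      intro b
      have h₁ := hx (b + -x)
      have h₂ := hx (-x)
      rw [neg_add_cancel_right] at h₁
      rw [neg_add_cancel] at h₂
      linarith
  have hadd : ∀ x y, φ (x + y) - φ 0 = (φ x - φ 0) + (φ y - φ 0) := fun x y => by
    linarith [key y (hS ▸ AddSubgroup.mem_top y) x]
  exact ⟨AddMonoidHom.mk' (fun x => φ x - φ 0) hadd, fun x => by simp⟩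

end Generation

theorem tsum_tsum_ite_sub_ite {β : Type*} [DecidableEq β] {A B : β → ℝ} (hA : Summable A)
    (hB : Summable B) (a : β) :
    ∑' x, ∑' y, ((if y = a then A x else 0) - (if x = a then B y else 0)) =
      ∑' x, A x - ∑' y, B y := by
  have h : ∀ x, HasSum (fun y => (if y = a then A x else 0) - (if x = a then B y else 0))
      (A x - if x = a then ∑' y, B y else 0) := fun x =>
    (hasSum_ite_eq a (A x)).sub (by split_ifs; exacts [hB.hasSum, hasSum_zero])
  rw [tsum_congr fun x => (h x).tsum_eq]
  exact (hA.hasSum.sub (hasSum_ite_eq a _)).tsum_eq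

theorem tsum_tsum_eq_add_of_eq_zero {β : Type*} [DecidableEq β] {f : β → β → ℝ} {a b : β}
    (hab : a ≠ b) (hf : ∀ x y, ¬(x = a ∧ y = b) → ¬(x = b ∧ y = a) → f x y = 0) :
    ∑' x, ∑' y, f x y = f a b + f b a := by
  rw [tsum_eq_sum (s := {a, b}), Finset.sum_pair hab, tsum_eq_single b, tsum_eq_single a]
  · exact fun y hy => hf b y (fun h => hab h.1.symm) (fun h => hy h.2)
  · exact fun y hy => hf a y (fun h => hy h.2) (fun h => hab h.1)
  · intro x hx
    simp only [Finset.mem_insert, Finset.mem_singleton, not_or] at hx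
    simp [hf x _ (fun h => hx.1 h.1) (fun h => hx.2 h.1)]

-- Lean's `x / 0 = 0` and `log 0 = 0` make `logMean x x = logMean x 0 = logMean 0 y = 0`.
noncomputable def logMean (x y : ℝ) : ℝ := (x - y) / Real.log (x / y)

theorem logMean_pos {x y : ℝ} (hx : 0 < x) (hy : 0 < y) (hxy : x ≠ y) : 0 < logMean x y := by
  rcases hxy.lt_or_gt with h | h
  · exact div_pos_of_neg_of_neg (by linarith) (Real.log_neg (div_pos hx hy) ((div_lt_one hy).2 h))
  · exact div_pos (by linarith) (Real.log_pos ((one_lt_div hy).2 h))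

theorem logMean_nonneg {x y : ℝ} (hx : 0 ≤ x) (hy : 0 ≤ y) : 0 ≤ logMean x y := by
  rcases hx.eq_or_lt with rfl | hx
  · simp [logMean]
  rcases hy.eq_or_lt with rfl | hy
  · simp [logMean]
  rcases eq_or_ne x y with rfl | hxy
  · simp [logMean]
  exact (logMean_pos hx hy hxy).le

theorem eq_zero_of_hasSum_mul_eq_zero {ι : Type*} {w g : ι → ℝ} {c : ℝ} (hw : ∀ i, 0 ≤ w i)
    (hg : ∀ i, g i = 0 ∨ g i = c) (h : HasSum (fun i => w i * g i) 0) {i : ι} (hi : 0 < w i) :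
    g i = 0 := by
  have hnonneg : ∀ j, 0 ≤ w j * g j * c := fun j => by
    rcases hg j with hj | hj <;> rw [hj] <;> nlinarith [hw j, mul_self_nonneg c]
  have hzero := (hasSum_zero_iff_of_nonneg hnonneg).1 (by simpa using h.mul_right c)
  have := congrFun hzero i
  simp only [Pi.zero_apply, mul_eq_zero, hi.ne', false_or] at this
  rcases this with h | h
  · exact h
  · rcases hg i with h' | h' <;> simp [h', h]

section DetailedBalance

variable {G : Type*} [AddCommGroup G] {p φ : G → ℝ}

-- For `φ = log π`: detailed balance of `π`, imposed only across steps `π a ≠ π b` of `π`.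
def DetailedBalanceAtSteps (p φ : G → ℝ) : Prop :=
  ∀ a b, φ a ≠ φ b → p (b - a) * Real.exp (φ a) = p (a - b) * Real.exp (φ b)

theorem DetailedBalanceAtSteps.increment_eq_or (hDB : DetailedBalanceAtSteps p φ) {u : G}
    (hu : 0 < p u) (a : G) :
    φ (a + u) = φ a ∨ φ (a + u) = φ a + Real.log (p u / p (-u)) := by
  by_cases h : φ (a + u) = φ a
  · exact Or.inl h
  right
  have hba := hDB a (a + u) (Ne.symm h)
  rw [add_sub_cancel_left, sub_add_cancel_left] at hba
  have hneg : 0 < p (-u) := by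
    by_contra hn
    have : p (-u) * Real.exp (φ (a + u)) ≤ 0 :=
      mul_nonpos_of_nonpos_of_nonneg (not_lt.1 hn) (Real.exp_pos _).le
    nlinarith [Real.exp_pos (φ a)]
  rw [show p u / p (-u) = Real.exp (φ (a + u) - φ a) by
    rw [Real.exp_sub, div_eq_div_iff hneg.ne' (Real.exp_pos _).ne']; linarith, Real.log_exp]
  ring

theorem DetailedBalanceAtSteps.ite_eq_logMean_mul (hp0 : ∀ u, 0 ≤ p u)
    (hDB : DetailedBalanceAtSteps p φ) (a u : G) :
    (if φ (a + u) = φ a then 0 else p u - p (-u)) =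
      logMean (p u) (p (-u)) * (φ (a + u) - φ a) := by
  split_ifs with h
  · rw [h, sub_self, mul_zero]
  rcases (hp0 u).eq_or_lt with hu | hu
  · have hba := hDB a (a + u) (Ne.symm h)
    rw [add_sub_cancel_left, sub_add_cancel_left, ← hu, zero_mul] at hba
    have hneg : p (-u) = 0 := by
      simpa [(Real.exp_pos _).ne'] using hba.symm
    simp [logMean, ← hu, hneg]
  · have hstep := (hDB.increment_eq_or hu a).resolve_left h
    have hc : Real.log (p u / p (-u)) ≠ 0 := fun hc => h (by simpa [hc] using hstep)
    rw [hstep, add_sub_cancel_left, logMean, div_mul_cancel₀ _ hc]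

theorem DetailedBalanceAtSteps.periodic_or_logMean_pos (hp0 : ∀ u, 0 ≤ p u)
    (hDB : DetailedBalanceAtSteps p φ) {u : G} (hu : 0 < p u) :
    Function.Periodic φ u ∨ 0 < logMean (p u) (p (-u)) := by
  by_cases hc : Real.log (p u / p (-u)) = 0
  · exact Or.inl fun b => by simpa [hc] using hDB.increment_eq_or hu b
  obtain ⟨hne0, hne1, -⟩ := Real.log_ne_zero.1 hc
  have hneg : 0 < p (-u) :=
    (hp0 _).lt_of_ne fun h => hne0 (by rw [← h, div_zero])
  exact Or.inr (logMean_pos hu hneg fun h => hne1 (by rw [h, div_self hneg.ne']))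

theorem DetailedBalanceAtSteps.add_increment_eq (hp0 : ∀ u, 0 ≤ p u)
    (hDB : DetailedBalanceAtSteps p φ)
    (hH : ∀ a, HasSum (fun u => if φ (a + u) = φ a then 0 else p u - p (-u)) 0)
    {z t : G} (hz : 0 < p z) (ht : 0 < p t) (b : G) :
    φ (b + t + z) - φ (b + t) = φ (b + z) - φ b := by
  rcases hDB.periodic_or_logMean_pos hp0 ht with hflat | hw
  · rw [add_right_comm, hflat, hflat]
  set D : G → ℝ := fun b => φ (b + z) - φ b
  have hD : ∀ b, D b = 0 ∨ D b = Real.log (p z / p (-z)) := fun b => by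
    rcases hDB.increment_eq_or hz b with h | h <;> simp [D, h]
  have harm : ∀ a, HasSum (fun u => logMean (p u) (p (-u)) * (φ (a + u) - φ a)) 0 := fun a => by
    simpa only [hDB.ite_eq_logMean_mul hp0 a] using hH a
  have hDharm : HasSum (fun u => logMean (p u) (p (-u)) * (D (b + u) - D b)) 0 := by
    have h := (harm (b + z)).sub (harm b)
    rw [sub_zero] at h
    refine h.congr_fun fun u => ?_
    simp only [D]
    rw [add_right_comm]
    ring
  -- `D` is two-valued, so its increments at `b` all have one sign: a maximum principle.
  suffices ∃ c, ∀ u, D (b + u) - D b = 0 ∨ D (b + u) - D b = c by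
    obtain ⟨c, hc⟩ := this
    have := eq_zero_of_hasSum_mul_eq_zero (fun u => logMean_nonneg (hp0 u) (hp0 (-u))) hc hDharm hw
    simp only [D] at this
    linarith
  rcases hD b with h | h
  · exact ⟨Real.log (p z / p (-z)), fun u => by rcases hD (b + u) with h' | h' <;> simp [h, h']⟩
  · exact ⟨-Real.log (p z / p (-z)), fun u => by rcases hD (b + u) with h' | h' <;> simp [h, h']⟩

theorem DetailedBalanceAtSteps.exists_addMonoidHom (hp0 : ∀ u, 0 ≤ p u)
    (hS : AddSubgroup.closure {u | 0 < p u} = ⊤) (hDB : DetailedBalanceAtSteps p φ)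
    (hH : ∀ a, HasSum (fun u => if φ (a + u) = φ a then 0 else p u - p (-u)) 0) :
    ∃ ψ : G →+ ℝ, ∀ x, φ x = φ 0 + ψ x :=
  exists_addMonoidHom_of_increment_eq hS fun z hz b => by
    simpa using eq_apply_zero_of_forall_periodic hS (f := fun b => φ (b + z) - φ b)
      (fun _ ht b => hDB.add_increment_eq hp0 hH hz ht b) b

end DetailedBalance

section Exclusion

variable {d : ℕ}

@[simp]
theorem ind_true : ind true = 1 := rfl

@[simp]
theorem ind_false : ind false = 0 := rfl

theorem ind_mul_one_sub_ind_self (b : Bool) : ind b * (1 - ind b) = 0 := by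
  cases b <;> simp [ind]

@[simp]
theorem swap_apply_left (η : Conf d) (x y : Zd d) : swap η x y x = η y := by
  simp [swap]

@[simp]
theorem swap_apply_right (η : Conf d) (x y : Zd d) : swap η x y y = η x := by
  unfold swap
  split_ifs with h <;> simp_all

theorem swap_apply_of_ne (η : Conf d) {x y z : Zd d} (hx : z ≠ x) (hy : z ≠ y) :
    swap η x y z = η z := by
  simp [swap, hx, hy]

theorem measurable_ind_apply (x : Zd d) : Measurable fun η : Conf d => ind (η x) :=
  (measurable_of_finite ind).comp (measurable_pi_apply x)

theorem measurable_swap (x y : Zd d) : Measurable fun η : Conf d => swap η x y := by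
  refine measurable_pi_lambda _ fun z => ?_
  unfold swap
  split_ifs <;> exact measurable_pi_apply _

theorem IsCylinder.exists_factor {f : Conf d → ℝ} (hf : IsCylinder f) :
    ∃ (F : Finset (Zd d)) (g : (F → Bool) → ℝ), ∀ η, f η = g fun x => η x := by
  obtain ⟨F, hF⟩ := hf
  exact ⟨F, fun b => f fun z => if h : z ∈ F then b ⟨z, h⟩ else false,
    fun η => hF _ _ fun x hx => by simp [hx]⟩

theorem IsCylinder.measurable {f : Conf d → ℝ} (hf : IsCylinder f) : Measurable f := by
  obtain ⟨F, g, hg⟩ := hf.exists_factor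
  rw [funext hg]
  exact (measurable_of_finite g).comp (measurable_pi_lambda _ fun x => measurable_pi_apply _)

theorem IsCylinder.exists_abs_le {f : Conf d → ℝ} (hf : IsCylinder f) : ∃ M, ∀ η, |f η| ≤ M := by
  obtain ⟨F, g, hg⟩ := hf.exists_factor
  obtain ⟨M, hM⟩ := (Set.finite_range fun b => |g b|).bddAbove
  exact ⟨M, fun η => hg η ▸ hM ⟨_, rfl⟩⟩

noncomputable def jumpTerm (p : Zd d → ℝ) (f : Conf d → ℝ) (x y : Zd d) (η : Conf d) : ℝ :=
  p (y - x) * ind (η x) * (1 - ind (η y)) * (f (swap η x y) - f η)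

theorem jumpTerm_self (p : Zd d → ℝ) (f : Conf d → ℝ) (x : Zd d) (η : Conf d) :
    jumpTerm p f x x η = 0 := by
  simp [jumpTerm, mul_assoc, ind_mul_one_sub_ind_self]

theorem jumpTerm_eq_zero {p : Zd d → ℝ} {f : Conf d → ℝ} {F : Finset (Zd d)}
    (hF : ∀ η η' : Conf d, (∀ z ∈ F, η z = η' z) → f η = f η') {x y : Zd d} (hx : x ∉ F)
    (hy : y ∉ F) (η : Conf d) : jumpTerm p f x y η = 0 := by
  rw [jumpTerm, hF (swap η x y) η fun z hz =>
      swap_apply_of_ne η (ne_of_mem_of_not_mem hz hx) (ne_of_mem_of_not_mem hz hy),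
    sub_self, mul_zero]

theorem abs_jumpTerm_le {p : Zd d → ℝ} (hp0 : ∀ z, 0 ≤ p z) {f : Conf d → ℝ} {M : ℝ}
    (hM : ∀ η, |f η| ≤ M) (x y : Zd d) (η : Conf d) :
    |jumpTerm p f x y η| ≤ 2 * M * p (y - x) := by
  have hind : |ind (η x) * (1 - ind (η y))| ≤ 1 := by
    cases η x <;> cases η y <;> simp
  have hdiff : |f (swap η x y) - f η| ≤ 2 * M := by
    linarith [abs_sub (f (swap η x y)) (f η), hM (swap η x y), hM η]
  have hsplit : jumpTerm p f x y η =
      p (y - x) * (ind (η x) * (1 - ind (η y)) * (f (swap η x y) - f η)) := by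
    unfold jumpTerm; ring
  rw [hsplit, abs_mul, abs_mul, abs_of_nonneg (hp0 _)]
  calc p (y - x) * (|ind (η x) * (1 - ind (η y))| * |f (swap η x y) - f η|)
      ≤ p (y - x) * (1 * (2 * M)) := by gcongr; exact hp0 _
    _ = 2 * M * p (y - x) := by ring

theorem summable_ite_mem_or_mem {p : Zd d → ℝ} (hp0 : ∀ z, 0 ≤ p z) (hp : Summable p)
    (F : Finset (Zd d)) :
    Summable fun q : Zd d × Zd d => if q.1 ∈ F ∨ q.2 ∈ F then p (q.2 - q.1) else 0 := by
  set row : Zd d → Zd d × Zd d → ℝ := fun c q => if q.1 = c then p (q.2 - q.1) else 0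
  set col : Zd d → Zd d × Zd d → ℝ := fun c q => if q.2 = c then p (q.2 - q.1) else 0
  have hrow : ∀ c, Summable (row c) := fun c =>
    (Function.Injective.summable_iff (Prod.mk_right_injective c) fun q hq =>
      if_neg fun h => hq ⟨q.2, by ext <;> simp [h]⟩).1
      (by simpa [row, Function.comp_def] using hp.comp_injective (sub_left_injective (b := c)))
  have hcol : ∀ c, Summable (col c) := fun c =>
    (Function.Injective.summable_iff (Prod.mk_left_injective c) fun q hq =>
      if_neg fun h => hq ⟨q.1, by ext <;> simp [h]⟩).1
      (by simpa [col, Function.comp_def] using hp.comp_injective (sub_right_injective (b := c)))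
  have hnonneg : ∀ c q, 0 ≤ row c q + col c q := fun c q => by
    simp only [row, col]
    split_ifs <;> simp [hp0]
  refine (summable_sum (s := F) fun c _ => (hrow c).add (hcol c)).of_nonneg_of_le
    (fun q => by split_ifs <;> simp [hp0]) fun q => ?_
  split_ifs with h
  · rcases h with h | h <;>
    · refine le_trans ?_ (Finset.single_le_sum (fun c _ => hnonneg c q) h)
      simp only [row, col, if_pos rfl]
      split_ifs <;> simp [hp0]
  · exact Finset.sum_nonneg fun c _ => hnonneg c q

theorem integral_gen {p : Zd d → ℝ} {μ : Measure (Conf d)} [IsProbabilityMeasure μ]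
    (hp0 : ∀ z, 0 ≤ p z) (hp : Summable p) {f : Conf d → ℝ} (hf : IsCylinder f) :
    ∫ η, gen p f η ∂μ = ∑' x, ∑' y, ∫ η, jumpTerm p f x y η ∂μ := by
  obtain ⟨M, hM⟩ := hf.exists_abs_le
  have hfm := hf.measurable
  obtain ⟨F, hF⟩ := hf
  set B : Zd d × Zd d → ℝ := fun q => 2 * M * if q.1 ∈ F ∨ q.2 ∈ F then p (q.2 - q.1) else 0
  have hB : Summable B := (summable_ite_mem_or_mem hp0 hp F).mul_left _
  have hle : ∀ q η, ‖jumpTerm p f q.1 q.2 η‖ ≤ B q := by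
    rintro ⟨x, y⟩ η
    simp only [B]
    split_ifs with h
    · simpa using abs_jumpTerm_le hp0 hM x y η
    · push Not at h
      simp [jumpTerm_eq_zero hF h.1 h.2]
  have hmeas : ∀ q : Zd d × Zd d, Measurable (jumpTerm p f q.1 q.2) := fun q =>
    (((measurable_const.mul (measurable_ind_apply _)).mul
      (measurable_const.sub (measurable_ind_apply _))).mul
      ((hfm.comp (measurable_swap _ _)).sub hfm))
  have hint : ∀ q, ∫ η, ‖jumpTerm p f q.1 q.2 η‖ ∂μ ≤ B q := fun q =>
    (integral_mono_of_nonneg (ae_of_all _ fun _ => norm_nonneg _) (integrable_const (B q))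
      (ae_of_all _ (hle q))).trans (by simp)
  calc ∫ η, gen p f η ∂μ = ∫ η, ∑' q : Zd d × Zd d, jumpTerm p f q.1 q.2 η ∂μ :=
        integral_congr_ae (ae_of_all _ fun η => ((hB.of_norm_bounded (hle · η)).tsum_prod).symm)
    _ = ∑' q : Zd d × Zd d, ∫ η, jumpTerm p f q.1 q.2 η ∂μ :=
        (integral_tsum_of_summable_integral_norm (fun q => Integrable.of_bound
          (hmeas q).aestronglyMeasurable (B q) (ae_of_all _ (hle q)))
          (hB.of_nonneg_of_le (fun q => integral_nonneg fun _ => norm_nonneg _) hint)).symm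
    _ = _ := (hB.of_norm_bounded fun q =>
        (norm_integral_le_integral_norm _).trans (hint q)).tsum_prod

end Exclusion

section ProductMeasure

variable {d : ℕ} {α : Zd d → ℝ} {μ : Measure (Conf d)}

noncomputable def occVac (B C : Finset (Zd d)) (η : Conf d) : ℝ :=
  (∏ x ∈ B, ind (η x)) * ∏ y ∈ C, (1 - ind (η y))

theorem measurableSet_forall_mem_eq (F : Finset (Zd d)) (b : Zd d → Bool) :
    MeasurableSet {η : Conf d | ∀ x ∈ F, η x = b x} := by
  simp only [Set.ofPred_forall]
  exact MeasurableSet.iInter fun x => MeasurableSet.iInter fun _ =>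
    (measurableSet_singleton (b x)).preimage (measurable_pi_apply x)

theorem occVac_eq_indicator {B C : Finset (Zd d)} (hBC : Disjoint B C) :
    occVac B C = {η : Conf d | ∀ x ∈ B ∪ C, η x = decide (x ∈ B)}.indicator fun _ => 1 := by
  ext η
  by_cases h : ∀ x ∈ B ∪ C, η x = decide (x ∈ B)
  · rw [Set.indicator_of_mem (s := {ζ : Conf d | ∀ x ∈ B ∪ C, ζ x = decide (x ∈ B)}) h, occVac,
      Finset.prod_eq_one fun x hx => by simp [h x (Finset.mem_union_left _ hx), hx, ind],
      Finset.prod_eq_one fun y hy => by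
        simp [h y (Finset.mem_union_right _ hy), Finset.disjoint_right.1 hBC hy, ind], one_mul]
  · rw [Set.indicator_of_notMem (s := {ζ : Conf d | ∀ x ∈ B ∪ C, ζ x = decide (x ∈ B)}) h]
    push Not at h
    obtain ⟨x, hx, hne⟩ := h
    rcases Finset.mem_union.1 hx with hxB | hxC
    · have : η x = false := by simpa [hxB] using hne
      rw [occVac, Finset.prod_eq_zero (f := fun x => ind (η x)) hxB (by simp [this, ind]), zero_mul]
    · have : η x = true := by simpa [Finset.disjoint_right.1 hBC hxC] using hne
      rw [occVac, Finset.prod_eq_zero (f := fun y => 1 - ind (η y)) hxC (by simp [this, ind]),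
        mul_zero]

theorem integrable_occVac [IsFiniteMeasure μ] {B C : Finset (Zd d)} (hBC : Disjoint B C) :
    Integrable (occVac B C) μ := by
  rw [occVac_eq_indicator hBC]
  exact (integrable_const 1).indicator (measurableSet_forall_mem_eq _ _)

theorem IsProductWith.integral_occVac (hμ : IsProductWith α μ) (hα : ∀ x, α x ∈ Set.Icc (0 : ℝ) 1)
    {B C : Finset (Zd d)} (hBC : Disjoint B C) :
    ∫ η, occVac B C η ∂μ = (∏ x ∈ B, α x) * ∏ y ∈ C, (1 - α y) := by
  rw [occVac_eq_indicator hBC, integral_indicator_const _ (measurableSet_forall_mem_eq _ _),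
    smul_eq_mul, mul_one, measureReal_def, hμ.2, ENNReal.toReal_prod, Finset.prod_union hBC]
  congr 1
  · refine Finset.prod_congr rfl fun x hx => ?_
    simp [hx, ENNReal.toReal_ofReal (hα x).1]
  · refine Finset.prod_congr rfl fun y hy => ?_
    simp [Finset.disjoint_right.1 hBC hy, ENNReal.toReal_ofReal (sub_nonneg.2 (hα y).2)]

theorem IsProductWith.integral_ind_mul_one_sub_ind (hμ : IsProductWith α μ)
    (hα : ∀ x, α x ∈ Set.Icc (0 : ℝ) 1) {x y : Zd d} (hxy : x ≠ y) :
    ∫ η, ind (η x) * (1 - ind (η y)) ∂μ = α x * (1 - α y) := by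
  simpa [occVac] using hμ.integral_occVac hα (B := {x}) (C := {y}) (by simpa using hxy)

theorem IsProductWith.integral_ind_mul_one_sub_ind_mul_centered (hμ : IsProductWith α μ)
    (hα : ∀ x, α x ∈ Set.Icc (0 : ℝ) 1) {x y c : Zd d} (hxy : x ≠ y) (hxc : x ≠ c)
    (hyc : y ≠ c) :
    ∫ η, ind (η x) * (1 - ind (η y)) * (ind (η c) - α c) ∂μ = 0 := by
  have : IsProbabilityMeasure μ := hμ.1
  have hB : Disjoint ({x, c} : Finset (Zd d)) {y} := by simp [hxy.symm, hyc]
  have hC : Disjoint ({x} : Finset (Zd d)) {y, c} := by simp [hxy, hxc]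
  have hsplit : ∀ η : Conf d, ind (η x) * (1 - ind (η y)) * (ind (η c) - α c) =
      (1 - α c) * occVac {x, c} {y} η - α c * occVac {x} {y, c} η := fun η => by
    simp only [occVac, Finset.prod_pair hxc, Finset.prod_pair hyc, Finset.prod_singleton]
    ring
  simp_rw [hsplit]
  rw [integral_sub ((integrable_occVac hB).const_mul _) ((integrable_occVac hC).const_mul _),
    integral_const_mul, integral_const_mul, hμ.integral_occVac hα hB, hμ.integral_occVac hα hC]
  simp only [Finset.prod_pair hxc, Finset.prod_pair hyc, Finset.prod_singleton]
  ring

end ProductMeasure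

section Stationarity

variable {d : ℕ} {p α : Zd d → ℝ} {μ : Measure (Conf d)}

theorem isCylinder_ind_apply (a : Zd d) : IsCylinder fun η : Conf d => ind (η a) :=
  ⟨{a}, fun _ _ h => congrArg ind (h a (Finset.mem_singleton_self a))⟩

theorem IsProductWith.integral_jumpTerm_ind (hμ : IsProductWith α μ)
    (hα : ∀ x, α x ∈ Set.Icc (0 : ℝ) 1) (a x y : Zd d) :
    ∫ η, jumpTerm p (fun η => ind (η a)) x y η ∂μ =
      (if y = a then p (a - x) * (α x * (1 - α a)) else 0) -
        (if x = a then p (y - a) * (α a * (1 - α y)) else 0) := by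
  rcases eq_or_ne x y with rfl | hxy
  · simp only [jumpTerm_self, integral_zero]
    split_ifs with h <;> simp [h]
  by_cases hxa : x = a
  · subst hxa
    have h : ∀ η : Conf d, jumpTerm p (fun η => ind (η x)) x y η =
        -p (y - x) * (ind (η x) * (1 - ind (η y))) := fun η => by
      simp only [jumpTerm, swap_apply_left]
      cases η x <;> cases η y <;> simp only [ind_true, ind_false] <;> ring
    simp_rw [h]
    rw [integral_const_mul, hμ.integral_ind_mul_one_sub_ind hα hxy]
    simp [hxy.symm]
  by_cases hya : y = a
  · subst hya
    have h : ∀ η : Conf d, jumpTerm p (fun η => ind (η y)) x y η =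
        p (y - x) * (ind (η x) * (1 - ind (η y))) := fun η => by
      simp only [jumpTerm, swap_apply_right]
      cases η x <;> cases η y <;> simp only [ind_true, ind_false] <;> ring
    simp_rw [h]
    rw [integral_const_mul, hμ.integral_ind_mul_one_sub_ind hα hxy]
    simp [hxa]
  have h : ∀ η : Conf d, jumpTerm p (fun η => ind (η a)) x y η = 0 :=
    jumpTerm_eq_zero (F := {a}) (fun _ _ h => congrArg ind (h a (Finset.mem_singleton_self a)))
      (by simpa using hxa) (by simpa using hya)
  simp [h, hxa, hya]

noncomputable def centeredPair (α : Zd d → ℝ) (a b : Zd d) (η : Conf d) : ℝ :=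
  (ind (η a) - α a) * (ind (η b) - α b)

theorem centeredPair_comm (α : Zd d → ℝ) (a b : Zd d) : centeredPair α a b = centeredPair α b a :=
  funext fun _ => mul_comm _ _

theorem centeredPair_eq_of_forall_mem_eq {α : Zd d → ℝ} {a b : Zd d} {η η' : Conf d}
    (h : ∀ z ∈ ({a, b} : Finset (Zd d)), η z = η' z) :
    centeredPair α a b η = centeredPair α a b η' := by
  simp [centeredPair, h a (by simp), h b (by simp)]

theorem isCylinder_centeredPair (α : Zd d → ℝ) (a b : Zd d) : IsCylinder (centeredPair α a b) :=
  ⟨{a, b}, fun _ _ => centeredPair_eq_of_forall_mem_eq⟩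

theorem IsProductWith.integral_jumpTerm_centeredPair_self (hμ : IsProductWith α μ)
    (hα : ∀ x, α x ∈ Set.Icc (0 : ℝ) 1) {a b : Zd d} (hab : a ≠ b) :
    ∫ η, jumpTerm p (centeredPair α a b) a b η ∂μ =
      p (b - a) * (α a * (1 - α b)) * (α b - α a) := by
  have h : ∀ η : Conf d, jumpTerm p (centeredPair α a b) a b η =
      p (b - a) * (α b - α a) * (ind (η a) * (1 - ind (η b))) := fun η => by
    simp only [jumpTerm, centeredPair, swap_apply_left, swap_apply_right]
    cases η a <;> cases η b <;> simp only [ind_true, ind_false] <;> ring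
  simp_rw [h]
  rw [integral_const_mul, hμ.integral_ind_mul_one_sub_ind hα hab]
  ring

theorem IsProductWith.integral_jumpTerm_centeredPair_left (hμ : IsProductWith α μ)
    (hα : ∀ x, α x ∈ Set.Icc (0 : ℝ) 1) {a b y : Zd d} (hab : a ≠ b) (hya : y ≠ a) (hyb : y ≠ b) :
    ∫ η, jumpTerm p (centeredPair α a b) a y η ∂μ = 0 := by
  have h : ∀ η : Conf d, jumpTerm p (centeredPair α a b) a y η =
      -p (y - a) * (ind (η a) * (1 - ind (η y)) * (ind (η b) - α b)) := fun η => by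
    simp only [jumpTerm, centeredPair, swap_apply_left, swap_apply_of_ne η hab.symm hyb.symm]
    cases η a <;> cases η y <;> simp only [ind_true, ind_false] <;> ring
  simp_rw [h]
  rw [integral_const_mul,
    hμ.integral_ind_mul_one_sub_ind_mul_centered hα hya.symm hab hyb, mul_zero]

theorem IsProductWith.integral_jumpTerm_centeredPair_right (hμ : IsProductWith α μ)
    (hα : ∀ x, α x ∈ Set.Icc (0 : ℝ) 1) {a b x : Zd d} (hab : a ≠ b) (hxa : x ≠ a) (hxb : x ≠ b) :
    ∫ η, jumpTerm p (centeredPair α a b) x a η ∂μ = 0 := by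
  have h : ∀ η : Conf d, jumpTerm p (centeredPair α a b) x a η =
      p (a - x) * (ind (η x) * (1 - ind (η a)) * (ind (η b) - α b)) := fun η => by
    simp only [jumpTerm, centeredPair, swap_apply_right, swap_apply_of_ne η hxb.symm hab.symm]
    cases η a <;> cases η x <;> simp only [ind_true, ind_false] <;> ring
  simp_rw [h]
  rw [integral_const_mul, hμ.integral_ind_mul_one_sub_ind_mul_centered hα hxa hxb hab, mul_zero]

theorem IsProductWith.integral_jumpTerm_centeredPair_eq_zero (hμ : IsProductWith α μ)
    (hα : ∀ x, α x ∈ Set.Icc (0 : ℝ) 1) {a b : Zd d} (hab : a ≠ b) (x y : Zd d)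
    (hxy₁ : ¬(x = a ∧ y = b)) (hxy₂ : ¬(x = b ∧ y = a)) :
    ∫ η, jumpTerm p (centeredPair α a b) x y η ∂μ = 0 := by
  rcases eq_or_ne x y with rfl | hxy
  · simp [jumpTerm_self]
  by_cases hx : x = a ∨ x = b <;> by_cases hy : y = a ∨ y = b
  · exfalso
    rcases hx with rfl | rfl <;> rcases hy with rfl | rfl <;> simp_all
  · push Not at hy
    rcases hx with rfl | rfl
    · exact hμ.integral_jumpTerm_centeredPair_left hα hab hy.1 hy.2
    · rw [centeredPair_comm]
      exact hμ.integral_jumpTerm_centeredPair_left hα hab.symm hy.2 hy.1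
  · push Not at hx
    rcases hy with rfl | rfl
    · exact hμ.integral_jumpTerm_centeredPair_right hα hab hx.1 hx.2
    · rw [centeredPair_comm]
      exact hμ.integral_jumpTerm_centeredPair_right hα hab.symm hx.2 hx.1
  · push Not at hx hy
    simp [jumpTerm_eq_zero (fun _ _ => centeredPair_eq_of_forall_mem_eq (α := α))
      (by simpa using hx) (by simpa using hy)]

theorem IsStationary.hasSum_netFlux (hstat : IsStationary p μ) (hμ : IsProductWith α μ)
    (hα : ∀ x, α x ∈ Set.Icc (0 : ℝ) 1) (hp0 : ∀ z, 0 ≤ p z) (hp : Summable p) (a : Zd d) :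
    HasSum (fun x => p (a - x) * (α x * (1 - α a)) - p (x - a) * (α a * (1 - α x))) 0 := by
  have : IsProbabilityMeasure μ := hμ.1
  have hle : ∀ x y, ‖α x * (1 - α y)‖ ≤ 1 := fun x y => by
    rw [Real.norm_eq_abs, abs_le]
    obtain ⟨hx0, hx1⟩ := hα x
    obtain ⟨hy0, hy1⟩ := hα y
    constructor <;> nlinarith
  have hA : Summable fun x => p (a - x) * (α x * (1 - α a)) :=
    (hp.comp_injective sub_right_injective).of_norm_bounded fun x => by
      simpa [abs_of_nonneg (hp0 _)] using mul_le_mul_of_nonneg_left (hle x a) (hp0 (a - x))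
  have hB : Summable fun y => p (y - a) * (α a * (1 - α y)) :=
    (hp.comp_injective sub_left_injective).of_norm_bounded fun y => by
      simpa [abs_of_nonneg (hp0 _)] using mul_le_mul_of_nonneg_left (hle a y) (hp0 (y - a))
  have h := hstat _ (isCylinder_ind_apply a)
  simp_rw [integral_gen hp0 hp (isCylinder_ind_apply a), hμ.integral_jumpTerm_ind hα,
    tsum_tsum_ite_sub_ite hA hB] at h
  simpa [h] using hA.hasSum.sub hB.hasSum

theorem IsStationary.detailedBalance (hstat : IsStationary p μ) (hμ : IsProductWith α μ)
    (hα : ∀ x, α x ∈ Set.Icc (0 : ℝ) 1) (hp0 : ∀ z, 0 ≤ p z) (hp : Summable p) {a b : Zd d}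
    (hne : α a ≠ α b) :
    p (b - a) * (α a * (1 - α b)) = p (a - b) * (α b * (1 - α a)) := by
  have : IsProbabilityMeasure μ := hμ.1
  have hab : a ≠ b := fun h => hne (h ▸ rfl)
  have h := hstat _ (isCylinder_centeredPair α a b)
  rw [integral_gen hp0 hp (isCylinder_centeredPair α a b),
    tsum_tsum_eq_add_of_eq_zero hab (hμ.integral_jumpTerm_centeredPair_eq_zero hα hab),
    hμ.integral_jumpTerm_centeredPair_self hα hab, centeredPair_comm,
    hμ.integral_jumpTerm_centeredPair_self hα hab.symm] at h
  have hfac : (α b - α a) *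
      (p (b - a) * (α a * (1 - α b)) - p (a - b) * (α b * (1 - α a))) = 0 := by
    linear_combination h
  exact sub_eq_zero.1 ((mul_eq_zero.1 hfac).resolve_left (sub_ne_zero.2 hne.symm))

end Stationarity

theorem exists_eq_innerR {d : ℕ} (ψ : Zd d →+ ℝ) : ∃ v : Fin d → ℝ, ∀ x, ψ x = innerR x v := by
  classical
  refine ⟨fun i => ψ fun j => if i = j then 1 else 0, fun x => ?_⟩
  rw [show ψ x = ψ.toIntLinearMap x from rfl, LinearMap.pi_apply_eq_sum_univ]
  simp only [zsmul_eq_mul]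
  rfl

section Logit

variable {d : ℕ} {p α : Zd d → ℝ}

theorem pifun_pos (hα : ∀ x, α x ∈ Set.Ioo (0 : ℝ) 1) (x : Zd d) : 0 < pifun α x :=
  div_pos (hα x).1 (sub_pos.2 (hα x).2)

theorem log_pifun_eq_log_pifun_iff (hα : ∀ x, α x ∈ Set.Ioo (0 : ℝ) 1) {x y : Zd d} :
    Real.log (pifun α x) = Real.log (pifun α y) ↔ α x = α y := by
  refine ⟨fun h => ?_, fun h => by rw [pifun, pifun, h]⟩
  have h' := Real.log_injOn_pos (pifun_pos hα x) (pifun_pos hα y) h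
  rw [pifun, pifun, div_eq_div_iff (sub_pos.2 (hα x).2).ne' (sub_pos.2 (hα y).2).ne'] at h'
  linarith

theorem detailedBalanceAtSteps_log_pifun (hα : ∀ x, α x ∈ Set.Ioo (0 : ℝ) 1)
    (hDB : ∀ a b, α a ≠ α b → p (b - a) * (α a * (1 - α b)) = p (a - b) * (α b * (1 - α a))) :
    DetailedBalanceAtSteps p fun x => Real.log (pifun α x) := by
  intro a b hab
  have h := hDB a b (mt (log_pifun_eq_log_pifun_iff hα).2 hab)
  rw [Real.exp_log (pifun_pos hα a), Real.exp_log (pifun_pos hα b), pifun, pifun]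
  have ha := sub_pos.2 (hα a).2
  have hb := sub_pos.2 (hα b).2
  field_simp
  linear_combination h

theorem hasSum_ite_log_pifun (hp : Summable p) (hα : ∀ x, α x ∈ Set.Ioo (0 : ℝ) 1)
    (hDB : ∀ a b, α a ≠ α b → p (b - a) * (α a * (1 - α b)) = p (a - b) * (α b * (1 - α a)))
    (a : Zd d)
    (hflux : HasSum (fun x => p (a - x) * (α x * (1 - α a)) - p (x - a) * (α a * (1 - α x))) 0) :
    HasSum (fun u => if Real.log (pifun α (a + u)) = Real.log (pifun α a) then 0 else p u - p (-u))
      0 := by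
  have hc : α a * (1 - α a) ≠ 0 := mul_ne_zero (hα a).1.ne' (sub_pos.2 (hα a).2).ne'
  have hdrift : HasSum (fun u => p (-u) - p u) 0 := by
    simpa using ((Equiv.neg (Zd d)).hasSum_iff.2 hp.hasSum).sub hp.hasSum
  have hshift := ((Equiv.addLeft a).hasSum_iff.2 hflux).sub (hdrift.mul_left (α a * (1 - α a)))
  rw [mul_zero, sub_zero] at hshift
  rw [← hasSum_mul_left_iff hc, mul_zero]
  refine hshift.congr_fun fun u => ?_
  simp only [Function.comp_apply, Equiv.coe_addLeft, sub_add_cancel_left, add_sub_cancel_left]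
  -- The net flux from `a + u` into `a` vanishes across a step, by detailed balance.
  split_ifs with h
  · rw [(log_pifun_eq_log_pifun_iff hα).1 h]
    ring
  · have hstep := hDB a (a + u) fun h' => h ((log_pifun_eq_log_pifun_iff hα).2 h'.symm)
    rw [add_sub_cancel_left, sub_add_cancel_left] at hstep
    linear_combination hstep

end Logit

theorem stationary_product_is_exponential {d : ℕ} (p : Zd d → ℝ)
    (hp0 : ∀ z, 0 ≤ p z) (hp1 : ∑' z : Zd d, p z = 1)
    (hgen : ∀ H : AddSubgroup (Zd d), (∀ u : Zd d, 0 < p u → u ∈ H) → H = ⊤)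
    (α : Zd d → ℝ) (hα : ∀ x, α x ∈ Set.Ioo (0 : ℝ) 1)
    (μ : Measure (Conf d)) (hμ : IsProductWith α μ) (hstat : IsStationary p μ) :
    ∃ v : Fin d → ℝ, ∀ x : Zd d, pifun α x = pifun α 0 * Real.exp (innerR x v) := by
  have hp : Summable p := by
    by_contra h
    simp [tsum_eq_zero_of_not_summable h] at hp1
  have hα' : ∀ x, α x ∈ Set.Icc (0 : ℝ) 1 := fun x => Set.Ioo_subset_Icc_self (hα x)
  have hDB := fun a b => hstat.detailedBalance (a := a) (b := b) hμ hα' hp0 hp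
  obtain ⟨ψ, hψ⟩ := (detailedBalanceAtSteps_log_pifun hα hDB).exists_addMonoidHom hp0
    (hgen _ fun u hu => AddSubgroup.subset_closure hu)
    fun a => hasSum_ite_log_pifun hp hα hDB a (hstat.hasSum_netFlux hμ hα' hp0 hp a)
  obtain ⟨v, hv⟩ := exists_eq_innerR ψ
  refine ⟨v, fun x => ?_⟩
  rw [← Real.exp_log (pifun_pos hα x), ← Real.exp_log (pifun_pos hα 0), hψ x, hv, Real.exp_add]

end ExclusionPaper
end

section
/- For every z ∈ ℤ^d and every integer n ≥ 1, Σ_{u ∈ ℤ^d} |1_{B_n}(u) − 1_{B_n}(u−z)| ≤ 2·(2n+1)^{d−1}·Σ_{j=1}^d |⟨z, v_j⟩|. -/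
open Filter Topology

namespace ExclusionPaper

noncomputable def bInd {d : ℕ} (vb : Fin d → Zd d) (n : ℕ) (u : Zd d) : ℝ :=
  if ∀ i, |innerZ u (vb i)| ≤ (n : ℤ) then 1 else 0

/-!
The map `Φ u = (⟨u, v_i⟩)_i` is additive and injective, since the Gram matrix of the orthogonal
nonzero vectors `v_i` is diagonal with nonzero entries. `B_n` is the preimage under `Φ` of the cube
`[-n, n]^d` and `Φ (u - z) = Φ u - Φ z`, so the sum is at most the number of lattice points in the
symmetric difference of the cube and its translate by `a = Φ z`. Passing from the cube to its
translate one coordinate at a time, consecutive boxes are products differing in a single factor,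
and each step costs at most `2 |a_k| (2n+1)^(d-1)` points.
-/

open Finset
open Fintype (piFinset mem_piFinset card_piFinset)
open scoped symmDiff

lemma card_symmDiff_le_sum_range {α : Type*} [DecidableEq α] (s : ℕ → Finset α) (m : ℕ) :
    #(s 0 ∆ s m) ≤ ∑ j ∈ range m, #(s j ∆ s (j + 1)) := by
  induction m with
  | zero => simp
  | succ m ih =>
    calc #(s 0 ∆ s (m + 1)) ≤ #(s 0 ∆ s m ∪ s m ∆ s (m + 1)) :=
          card_le_card (symmDiff_triangle _ _ _)
      _ ≤ #(s 0 ∆ s m) + #(s m ∆ s (m + 1)) := card_union_le _ _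
      _ ≤ _ := by rw [sum_range_succ]; gcongr

lemma piFinset_symmDiff_piFinset {ι : Type*} [DecidableEq ι] [Fintype ι] {α : ι → Type*}
    [∀ i, DecidableEq (α i)] {s t : ∀ i, Finset (α i)} {k : ι} (hst : ∀ i ≠ k, s i = t i) :
    piFinset s ∆ piFinset t = piFinset (Function.update s k (s k ∆ t k)) := by
  ext f
  have split (u : ∀ i, Finset (α i)) : (∀ i, f i ∈ u i) ↔ f k ∈ u k ∧ ∀ i ≠ k, f i ∈ u i :=
    ⟨fun h ↦ ⟨h k, fun i _ ↦ h i⟩, fun h i ↦ by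
      rcases eq_or_ne i k with rfl | hi
      exacts [h.1, h.2 i hi]⟩
  have hrest : (∀ i ≠ k, f i ∈ t i) ↔ ∀ i ≠ k, f i ∈ s i :=
    forall₂_congr fun i hi ↦ by rw [hst i hi]
  simp only [mem_symmDiff, mem_piFinset, split t, hrest, split s,
    Function.forall_update_iff s (fun i (u : Finset (α i)) ↦ f i ∈ u)]
  tauto

lemma card_piFinset_symmDiff_piFinset {ι : Type*} [DecidableEq ι] [Fintype ι] {α : ι → Type*}
    [∀ i, DecidableEq (α i)] {s t : ∀ i, Finset (α i)} {k : ι} (hst : ∀ i ≠ k, s i = t i) :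
    #(piFinset s ∆ piFinset t) = #(s k ∆ t k) * ∏ i ∈ univ.erase k, #(s i) := by
  rw [piFinset_symmDiff_piFinset hst, card_piFinset, ← mul_prod_erase _ _ (mem_univ k),
    Function.update_self]
  congr 1
  exact prod_congr rfl fun i hi ↦ by rw [Function.update_of_ne (ne_of_mem_erase hi)]

lemma card_Icc_symmDiff_Icc_le (x y : ℤ) (n : ℕ) :
    #(Icc (x - n) (x + n) ∆ Icc (y - n) (y + n)) ≤ 2 * (x - y).natAbs := by
  have h1 := card_sdiff_add_card_inter (Icc (x - n) (x + n)) (Icc (y - n) (y + n))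
  have h2 := card_sdiff_add_card_inter (Icc (y - n) (y + n)) (Icc (x - n) (x + n))
  have hinter (a b c e : ℤ) : Icc a b ∩ Icc c e = Icc (max a c) (min b e) := by
    ext; simp only [mem_inter, mem_Icc]; omega
  rw [hinter, Int.card_Icc, Int.card_Icc] at h1 h2
  grw [symmDiff_def, sup_eq_union, card_union_le]
  omega

variable {d : ℕ}

noncomputable def box (c : Zd d) (n : ℕ) : Finset (Zd d) :=
  piFinset fun i ↦ Icc (c i - n) (c i + n)

lemma mem_box {c w : Zd d} {n : ℕ} : w ∈ box c n ↔ ∀ i, |w i - c i| ≤ n := by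
  simp only [box, mem_piFinset, mem_Icc, abs_le]
  exact forall_congr' fun i ↦ by omega

lemma card_box_symmDiff_box_le {c c' : Zd d} {k : Fin d} (h : ∀ i ≠ k, c i = c' i) (n : ℕ) :
    #(box c n ∆ box c' n) ≤ 2 * (c k - c' k).natAbs * (2 * n + 1) ^ (d - 1) := by
  rw [box, box, card_piFinset_symmDiff_piFinset fun i hi ↦ by rw [h i hi]]
  have hside (i : Fin d) : #(Icc (c i - n) (c i + n)) = 2 * n + 1 := by
    rw [Int.card_Icc]; omega
  simp only [hside, prod_const, card_erase_of_mem (mem_univ k), card_univ, Fintype.card_fin]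
  gcongr
  exact card_Icc_symmDiff_Icc_le _ _ n

lemma card_box_zero_symmDiff_box_le (a : Zd d) (n : ℕ) :
    #(box 0 n ∆ box a n) ≤ ∑ k, 2 * (a k).natAbs * (2 * n + 1) ^ (d - 1) := by
  let c (j : ℕ) : Zd d := fun i ↦ if (i : ℕ) < j then a i else 0
  have hc0 : c 0 = 0 := by ext i; simp [c]
  have hcd : c d = a := by ext i; simp [c, i.isLt]
  calc #(box 0 n ∆ box a n) = #(box (c 0) n ∆ box (c d) n) := by rw [hc0, hcd]
    _ ≤ ∑ j ∈ range d, #(box (c j) n ∆ box (c (j + 1)) n) :=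
        card_symmDiff_le_sum_range (fun j ↦ box (c j) n) d
    _ = ∑ k : Fin d, #(box (c k) n ∆ box (c (k + 1)) n) :=
        (Fin.sum_univ_eq_sum_range (fun j ↦ #(box (c j) n ∆ box (c (j + 1)) n)) d).symm
    _ ≤ ∑ k, 2 * (a k).natAbs * (2 * n + 1) ^ (d - 1) := by
        gcongr with k
        have hk : ∀ i ≠ k, c k i = c (k + 1) i := fun i hi ↦ by
          have : (i : ℕ) ≠ k := Fin.val_ne_of_ne hi
          simp only [c]; split_ifs <;> omega
        simpa [c] using card_box_symmDiff_box_le hk n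

@[simps]
def innerZHom (v : Fin d → Zd d) : Zd d →+ Zd d where
  toFun u i := innerZ u (v i)
  map_zero' := by ext i; simp [innerZ]
  map_add' u u' := by ext i; simp [innerZ, add_mul, sum_add_distrib]

lemma innerZHom_injective {v : Fin d → Zd d} (hne : ∀ i, v i ≠ 0)
    (horth : ∀ i j, i ≠ j → innerZ (v i) (v j) = 0) : Function.Injective (innerZHom v) := by
  let M : Matrix (Fin d) (Fin d) ℤ := Matrix.of v
  have hgram : M * M.transpose = Matrix.diagonal fun i ↦ innerZ (v i) (v i) := by
    ext i j
    rcases eq_or_ne i j with rfl | hij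
    · simp [M, Matrix.mul_apply, innerZ]
    · simpa [M, Matrix.mul_apply, innerZ, hij] using horth i j hij
  have hdet : M.det ≠ 0 := by
    have : M.det * M.det = ∏ i, innerZ (v i) (v i) := by
      rw [← Matrix.det_diagonal, ← hgram, Matrix.det_mul, Matrix.det_transpose]
    refine left_ne_zero_of_mul (this ▸ prod_ne_zero_iff.2 fun i _ ↦ ?_)
    exact dotProduct_self_eq_zero.not.2 (hne i)
  refine (injective_iff_map_eq_zero _).2 fun u hu ↦ Matrix.eq_zero_of_mulVec_eq_zero hdet ?_
  ext i
  simpa [M, Matrix.mulVec, innerZ, dotProduct, mul_comm] using congrFun hu i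

lemma bInd_sub_eq_indicator (v : Fin d → Zd d) (n : ℕ) (u z : Zd d) :
    bInd v n (u - z) = (box (innerZHom v z) n : Set (Zd d)).indicator 1 (innerZHom v u) := by
  have h (i : Fin d) : innerZ (u - z) (v i) = innerZHom v u i - innerZHom v z i := by
    rw [← Pi.sub_apply, ← map_sub, innerZHom_apply]
  simp only [bInd, h, Set.indicator_apply, mem_coe, mem_box, Pi.one_apply]

lemma tsum_indicator_comp_le_card {α β : Type*} (s : Finset β) {f : α → β}
    (hf : Function.Injective f) : ∑' a, (s : Set β).indicator 1 (f a) ≤ (#s : ℝ) := by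
  have hsupp : ∀ b ∉ s, (s : Set β).indicator (1 : β → ℝ) b = 0 := fun b hb ↦
    Set.indicator_of_notMem (mem_coe.not.2 hb) _
  calc ∑' a, (s : Set β).indicator 1 (f a) ≤ ∑' b, (s : Set β).indicator (1 : β → ℝ) b :=
        tsum_comp_le_tsum_of_inj (summable_of_ne_finset_zero hsupp)
          (Set.indicator_nonneg fun _ _ ↦ zero_le_one) hf
    _ = #s := by
        rw [tsum_eq_sum hsupp, sum_congr rfl fun b hb ↦ Set.indicator_of_mem (mem_coe.2 hb) _]
        simp

theorem indicator_difference_bound_general {d : ℕ} (vb : Fin d → Zd d)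
    (hne : ∀ i, vb i ≠ 0)
    (horth : ∀ i j, i ≠ j → innerZ (vb i) (vb j) = 0)
    (n : ℕ) (z : Zd d) :
    ∑' u : Zd d, |bInd vb n u - bInd vb n (u - z)| ≤
      2 * (2 * (n : ℝ) + 1) ^ (d - 1) * ∑ j, |((innerZ z (vb j) : ℤ) : ℝ)| := by
  set a := innerZHom vb z
  have hdiff (u : Zd d) : |bInd vb n u - bInd vb n (u - z)| =
      ((box 0 n ∆ box a n : Finset (Zd d)) : Set (Zd d)).indicator 1 (innerZHom vb u) := by
    have h0 : bInd vb n u = (box (0 : Zd d) n : Set (Zd d)).indicator 1 (innerZHom vb u) := by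
      simpa using bInd_sub_eq_indicator vb n u 0
    rw [h0, bInd_sub_eq_indicator, coe_symmDiff, ← Set.abs_indicator_symmDiff]
    exact abs_of_nonneg (Set.indicator_nonneg (fun _ _ ↦ zero_le_one) _)
  calc ∑' u, |bInd vb n u - bInd vb n (u - z)| ≤ #(box 0 n ∆ box a n) := by
        simpa only [hdiff] using tsum_indicator_comp_le_card _ (innerZHom_injective hne horth)
    _ ≤ ((∑ k, 2 * (a k).natAbs * (2 * n + 1) ^ (d - 1) : ℕ) : ℝ) := by
        exact_mod_cast card_box_zero_symmDiff_box_le a n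
    _ = _ := by
        push_cast [Nat.cast_natAbs, mul_sum]
        exact sum_congr rfl fun k _ ↦ by simp [a]; ring

theorem indicator_difference_bound {d : ℕ} (vb : Fin d → Zd d)
    (hne : ∀ i, vb i ≠ 0)
    (horth : ∀ i j, i ≠ j → innerZ (vb i) (vb j) = 0)
    (n : ℕ) (hn : 1 ≤ n) (z : Zd d) :
    ∑' u : Zd d, |bInd vb n u - bInd vb n (u - z)| ≤
      2 * (2 * (n : ℝ) + 1) ^ (d - 1) * ∑ j, |((innerZ z (vb j) : ℤ) : ℝ)| :=
  indicator_difference_bound_general vb hne horth n z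

end ExclusionPaper
end

section
/- There exist a strictly increasing sequence n_k of positive integers and a constant K > 0 such that for every r ∈ Γ, n_k^{1−d} · #{u ∈ B_{n_k} : ⟨u, v⟩ = r} → K as k → ∞. -/
open Filter Topology
open Matrix

namespace ExclusionPaper

lemma ncard_biUnion_finset {α β : Type*} (T : Finset α) (f : α → Set β)
    (hfin : ∀ a ∈ T, (f a).Finite)
    (hdisj : ∀ a ∈ T, ∀ b ∈ T, a ≠ b → Disjoint (f a) (f b)) :
    (⋃ a ∈ T, f a).ncard = ∑ a ∈ T, (f a).ncard := by
  classical
  induction T using Finset.induction with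
  | empty => simp
  | @insert x s hx ih =>
    have hd : Disjoint (f x) (⋃ a ∈ s, f a) := by
      rw [Set.disjoint_iUnion₂_right]
      intro a ha
      exact hdisj x (Finset.mem_insert_self x s) a (Finset.mem_insert_of_mem ha)
        (fun h => hx (h ▸ ha))
    have hfx : (f x).Finite := hfin x (Finset.mem_insert_self x s)
    have hfu : (⋃ a ∈ s, f a).Finite := Set.Finite.biUnion s.finite_toSet
        (fun a ha => hfin a (Finset.mem_insert_of_mem ha))
    rw [Finset.sum_insert hx, Finset.set_biUnion_insert,
      Set.ncard_union_eq hd hfx hfu,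
      ih (fun a ha => hfin a (Finset.mem_insert_of_mem ha))
        (fun a ha b hb hab => hdisj a (Finset.mem_insert_of_mem ha) b (Finset.mem_insert_of_mem hb) hab)]

lemma eps_bounds (M s : ℤ) (hM : 0 < M) :
    -1 ≤ s / M + (-s) / M ∧ s / M + (-s) / M ≤ 0 := by
  have h1 := Int.mul_ediv_add_emod s M
  have h2 := Int.mul_ediv_add_emod (-s) M
  have hm1 : 0 ≤ s % M := Int.emod_nonneg s (ne_of_gt hM)
  have hm2 : s % M < M := Int.emod_lt_of_pos s hM
  have hm3 : 0 ≤ (-s) % M := Int.emod_nonneg (-s) (ne_of_gt hM)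
  have hm4 : (-s) % M < M := Int.emod_lt_of_pos (-s) hM
  have key : M * (s / M + (-s) / M) = -(s % M + (-s) % M) := by linarith
  constructor
  · have : M * (-2) < M * (s / M + (-s) / M) := by linarith
    have := (mul_lt_mul_iff_right₀ hM).mp this
    linarith
  · by_contra h
    push_neg at h
    have : M * 0 < M * (s / M + (-s) / M) := (mul_lt_mul_iff_right₀ hM).mpr h
    linarith

lemma fiber_eq_Icc (M s n : ℤ) (hM : 0 < M) :
    {m : ℤ | |s + M * m| ≤ n} = Set.Icc (-((n + s)/M)) ((n - s)/M) := by
  have hMne : M ≠ 0 := ne_of_gt hM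
  ext m
  simp only [Set.mem_setOf_eq, Set.mem_Icc, abs_le]
  constructor
  · rintro ⟨h1, h2⟩
    constructor
    · have : -m ≤ (n + s)/M := by
        rw [Int.le_ediv_iff_mul_le hM]; linarith
      linarith
    · rw [Int.le_ediv_iff_mul_le hM]; linarith
  · rintro ⟨h1, h2⟩
    have e1 : ((n + s)/M) * M ≤ n + s := Int.ediv_mul_le _ hMne
    have e2 : ((n - s)/M) * M ≤ n - s := Int.ediv_mul_le _ hMne
    have b1 : (-m) * M ≤ ((n + s)/M) * M := by
      apply mul_le_mul_of_nonneg_right _ (le_of_lt hM); linarith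
    have b2 : m * M ≤ ((n - s)/M) * M := by
      apply mul_le_mul_of_nonneg_right h2 (le_of_lt hM)
    constructor <;> nlinarith

lemma fiber_finite (M s n : ℤ) (hM : 0 < M) : {m : ℤ | |s + M * m| ≤ n}.Finite := by
  rw [fiber_eq_Icc M s n hM]; exact Set.finite_Icc _ _

lemma count_fiber (M s : ℤ) (hM : 0 < M) (k : ℕ) :
    {m : ℤ | |s + M * m| ≤ ((k:ℤ)+1)*M}.ncard
      = (2*((k:ℤ)+1) + 1 + (s / M + (-s) / M)).toNat := by
  have hMne : M ≠ 0 := ne_of_gt hM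
  set n : ℤ := ((k:ℤ)+1)*M with hn
  rw [fiber_eq_Icc M s n hM, ← Finset.coe_Icc, Set.ncard_coe_finset, Int.card_Icc]
  congr 1
  have e1 : (n - s)/M = (-s)/M + ((k:ℤ)+1) := by
    rw [hn]; rw [show ((k:ℤ)+1)*M - s = -s + ((k:ℤ)+1) * M by ring]
    exact Int.add_mul_ediv_right _ _ hMne
  have e2 : (n + s)/M = s/M + ((k:ℤ)+1) := by
    rw [hn]; rw [show ((k:ℤ)+1)*M + s = s + ((k:ℤ)+1) * M by ring]
    exact Int.add_mul_ediv_right _ _ hMne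
  rw [e1, e2]; ring

section setup
variable {d : ℕ} (vb : Fin d → Zd d)

def matA : Matrix (Fin d) (Fin d) ℤ := Matrix.of fun i j => vb i j

lemma innerZ_mulVec (u : Zd d) (i : Fin d) :
    innerZ u (vb i) = (matA vb).mulVec u i := by
  simp only [innerZ, matA, Matrix.mulVec, dotProduct, Matrix.of_apply]
  exact Finset.sum_congr rfl fun j _ => mul_comm _ _

lemma innerZ_self_pos {x : Zd d} (hx : x ≠ 0) : 0 < innerZ x x := by
  have hnn : 0 ≤ innerZ x x := Finset.sum_nonneg fun i _ => mul_self_nonneg _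
  rcases hnn.lt_or_eq with h | h
  · exact h
  · exfalso; apply hx
    funext i
    have := (Finset.sum_eq_zero_iff_of_nonneg (fun j (_ : j ∈ Finset.univ) => mul_self_nonneg (x j))).mp h.symm i (Finset.mem_univ i)
    exact mul_self_eq_zero.mp this

lemma matA_mul_transpose (horth : ∀ i j, i ≠ j → innerZ (vb i) (vb j) = 0) :
    matA vb * (matA vb)ᵀ = Matrix.diagonal (fun i => innerZ (vb i) (vb i)) := by
  ext i j
  simp only [Matrix.mul_apply, Matrix.transpose_apply, matA, Matrix.of_apply,
    Matrix.diagonal_apply]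
  by_cases h : i = j
  · subst h; simp [innerZ]
  · simp [h]; rw [← horth i j h]; rfl

lemma det_matA_sq (horth : ∀ i j, i ≠ j → innerZ (vb i) (vb j) = 0) (hne : ∀ i, vb i ≠ 0) :
    0 < (matA vb).det * (matA vb).det := by
  have : (matA vb).det * (matA vb).det = ∏ i, innerZ (vb i) (vb i) := by
    rw [show (matA vb).det * (matA vb).det = (matA vb * (matA vb)ᵀ).det by
      rw [Matrix.det_mul, Matrix.det_transpose]]
    rw [matA_mul_transpose vb horth, Matrix.det_diagonal]
  rw [this]
  exact Finset.prod_pos fun i _ => innerZ_self_pos (hne i)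

lemma mulVec_injective (horth : ∀ i j, i ≠ j → innerZ (vb i) (vb j) = 0) (hne : ∀ i, vb i ≠ 0) :
    Function.Injective (matA vb).mulVec := by
  intro u u' h
  have hdet : (matA vb).det ≠ 0 := by
    intro h0
    have := det_matA_sq vb horth hne
    rw [h0] at this; simp at this
  have h2 : (matA vb).det • u = (matA vb).det • u' := by
    have e : ∀ w : Zd d, ((matA vb).adjugate).mulVec ((matA vb).mulVec w) = (matA vb).det • w := by
      intro w
      rw [Matrix.mulVec_mulVec, Matrix.adjugate_mul, Matrix.smul_mulVec, Matrix.one_mulVec]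
    rw [← e u, ← e u', h]
  funext i
  have := congrFun h2 i
  simp only [Pi.smul_apply, smul_eq_mul] at this
  exact mul_left_cancel₀ hdet this

lemma mul_mem_range (horth : ∀ i j, i ≠ j → innerZ (vb i) (vb j) = 0) (hne : ∀ i, vb i ≠ 0) (x : Zd d) :
    ∃ u : Zd d, (matA vb).mulVec u = fun i => (∏ j, innerZ (vb j) (vb j)) * x i := by
  refine ⟨(matA vb)ᵀ.mulVec (fun i => (∏ j ∈ Finset.univ.erase i, innerZ (vb j) (vb j)) * x i), ?_⟩
  rw [Matrix.mulVec_mulVec, matA_mul_transpose vb horth]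
  funext i
  rw [Matrix.mulVec_diagonal]
  rw [← mul_assoc]
  exact congrArg (· * x i) (Finset.mul_prod_erase Finset.univ (fun j => innerZ (vb j) (vb j)) (Finset.mem_univ i))

end setup

section main
variable {d : ℕ}

def Qv (vb : Fin d → Zd d) : ℤ := ∏ j, innerZ (vb j) (vb j)

lemma Qv_pos (vb : Fin d → Zd d) (hne : ∀ i, vb i ≠ 0) : 0 < Qv vb :=
  Finset.prod_pos fun i _ => innerZ_self_pos (hne i)

noncomputable def TT [NeZero d] (vb : Fin d → Zd d) : Finset (Zd d) := by
  classical
  exact (Finset.Icc (0 : Zd d) (fun _ => Qv vb - 1)).filter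
    (fun t => (∃ u : Zd d, (matA vb).mulVec u = t) ∧ t 0 = 0)

def epsQ (vb : Fin d → Zd d) (s : ℤ) : ℤ := s / Qv vb + (-s) / Qv vb

lemma mem_TT [NeZero d] (vb : Fin d → Zd d) (t : Zd d) :
    t ∈ TT vb ↔ ((∀ i, 0 ≤ t i ∧ t i ≤ Qv vb - 1) ∧
      (∃ u : Zd d, (matA vb).mulVec u = t) ∧ t 0 = 0) := by
  classical
  simp [TT, Finset.mem_filter, Finset.mem_Icc, Pi.le_def, forall_and]

lemma TT_nonempty [NeZero d] (vb : Fin d → Zd d) (hne : ∀ i, vb i ≠ 0) :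
    (TT vb).Nonempty := by
  refine ⟨0, (mem_TT vb 0).mpr ⟨fun i => ⟨le_refl _, ?_⟩, ⟨0, ?_⟩, rfl⟩⟩
  · have := Qv_pos vb hne
    simp only [Pi.zero_apply]
    omega
  · simp [Matrix.mulVec_zero]

lemma count_slice [NeZero d] (vb : Fin d → Zd d)
    (horth : ∀ i j, i ≠ j → innerZ (vb i) (vb j) = 0) (hne : ∀ i, vb i ≠ 0)
    (r : ℤ) (c : Zd d) (hc : ∃ u : Zd d, (matA vb).mulVec u = c)
    (hc0 : c 0 = r) (k : ℕ) (hk : |r| ≤ ((k:ℤ)+1) * Qv vb) :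
    {u : Zd d | (∀ i, |innerZ u (vb i)| ≤ ((k:ℤ)+1) * Qv vb) ∧ innerZ u (vb 0) = r}.ncard
      = ∑ t ∈ TT vb, ∏ i : {i : Fin d // i ≠ 0},
          (2*((k:ℤ)+1) + 1 + epsQ vb (c i.1 + t i.1)).toNat := by
  classical
  set Q : ℤ := Qv vb with hQdef
  have hQ : 0 < Q := Qv_pos vb hne
  have hQne : Q ≠ 0 := ne_of_gt hQ
  set n : ℤ := ((k:ℤ)+1) * Q with hndef
  set A := matA vb with hA
  have hin : ∀ (u : Zd d) i, innerZ u (vb i) = A.mulVec u i := innerZ_mulVec vb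
  obtain ⟨uc, huc⟩ := hc
  have hQmul : ∀ x : Zd d, ∃ u : Zd d, A.mulVec u = fun i => Q * x i :=
    mul_mem_range vb horth hne
  -- the translated set W
  set S : Set (Zd d) := {u | (∀ i, |innerZ u (vb i)| ≤ n) ∧ innerZ u (vb 0) = r} with hS
  set W : Set (Zd d) := {w | (∃ u : Zd d, A.mulVec u = w) ∧ w 0 = 0 ∧
      ∀ i, i ≠ 0 → |c i + w i| ≤ n} with hW
  have hginj : Function.Injective (fun u : Zd d => A.mulVec u - c) := by
    intro a b h
    exact mulVec_injective vb horth hne (by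
      have := sub_left_injective.eq_iff.mp h
      exact this)
  have him : (fun u : Zd d => A.mulVec u - c) '' S = W := by
    ext w
    constructor
    · rintro ⟨u, ⟨hu1, hu2⟩, rfl⟩
      refine ⟨⟨u - uc, ?_⟩, ?_, ?_⟩
      · rw [Matrix.mulVec_sub, huc]
      · simp only [Pi.sub_apply]
        rw [← hin u 0, hu2, hc0]; ring
      · intro i _
        have : c i + (A.mulVec u - c) i = A.mulVec u i := by
          simp only [Pi.sub_apply]; ring
        rw [this, ← hin u i]
        exact hu1 i
    · rintro ⟨⟨uw, huw⟩, hw0, hwbox⟩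
      refine ⟨uw + uc, ⟨?_, ?_⟩, ?_⟩
      · intro i
        have hval : innerZ (uw + uc) (vb i) = w i + c i := by
          rw [hin, Matrix.mulVec_add, huw, huc]; simp
        rw [hval]
        by_cases h : i = 0
        · subst h; rw [hw0, hc0]; simpa using hk
        · have := hwbox i h; rw [show w i + c i = c i + w i by ring]; exact this
      · rw [hin, Matrix.mulVec_add, huw, huc]
        simp [hw0, hc0]
      · show A.mulVec (uw + uc) - c = w
        rw [Matrix.mulVec_add, huw, huc]
        funext i; simp
  have h1 : S.ncard = W.ncard := by
    rw [← him, Set.ncard_image_of_injective _ hginj]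
  -- decomposition of W
  set ext : ({i : Fin d // i ≠ 0} → ℤ) → Zd d :=
    fun m i => if h : i = 0 then 0 else m ⟨i, h⟩ with hext
  set ψ : Zd d → ({i : Fin d // i ≠ 0} → ℤ) → Zd d :=
    fun t m i => t i + Q * ext m i with hψ
  set P : Zd d → Set ({i : Fin d // i ≠ 0} → ℤ) :=
    fun t => Set.pi Set.univ (fun i => {m : ℤ | |c i.1 + t i.1 + Q * m| ≤ n}) with hP
  have hψW : ∀ t ∈ TT vb, ∀ m ∈ P t, ψ t m ∈ W := by
    intro t ht m hm
    obtain ⟨hbnd, ⟨ut, hut⟩, ht0⟩ := (mem_TT vb t).mp ht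
    refine ⟨?_, ?_, ?_⟩
    · obtain ⟨uy, huy⟩ := hQmul (ext m)
      exact ⟨ut + uy, by rw [Matrix.mulVec_add, hut, huy]; rfl⟩
    · show t 0 + Q * ext m 0 = 0
      rw [ht0, hext]; simp
    · intro i hi
      have := hm ⟨i, hi⟩ (Set.mem_univ _)
      simp only [Set.mem_setOf_eq] at this
      show |c i + (t i + Q * ext m i)| ≤ n
      rw [hext]; simp only [dif_neg hi]
      rw [← add_assoc]
      exact this
  have hWU : W = ⋃ t ∈ TT vb, ψ t '' P t := by
    ext w
    constructor
    · rintro ⟨⟨uw, huw⟩, hw0, hbox⟩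
      set t : Zd d := fun i => if i = 0 then 0 else w i % Q with htdef
      set m : {i : Fin d // i ≠ 0} → ℤ := fun i => w i.1 / Q with hmdef
      have hwt : ∀ i : Fin d, i ≠ 0 → t i + Q * (w i / Q) = w i := by
        intro i hi
        rw [htdef]; simp only [if_neg hi]
        exact Int.emod_add_mul_ediv (w i) Q
      have hψeq : ψ t m = w := by
        funext i
        show t i + Q * ext m i = w i
        by_cases h : i = 0
        · subst h; rw [htdef, hext]; simp [hw0]
        · rw [hext]; simp only [dif_neg h]; exact hwt i h
      have htT : t ∈ TT vb := by
        refine (mem_TT vb t).mpr ⟨?_, ?_, ?_⟩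
        · intro i
          rw [htdef]
          by_cases h : i = 0
          · simp [h]; omega
          · simp only [if_neg h]
            have h1 := Int.emod_nonneg (w i) hQne
            have h2 := Int.emod_lt_of_pos (w i) hQ
            omega
        · obtain ⟨uy, huy⟩ := hQmul (fun i => -(ext m i))
          refine ⟨uw + uy, ?_⟩
          rw [Matrix.mulVec_add, huw, huy]
          funext i
          show w i + Q * (-(ext m i)) = t i
          by_cases h : i = 0
          · subst h; rw [hext, htdef]; simp [hw0]
          · rw [hext]; simp only [dif_neg h]
            have hmv : m ⟨i, h⟩ = w i / Q := rfl
            rw [hmv, mul_neg]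
            have := hwt i h
            linarith
        · rw [htdef]; simp
      refine Set.mem_biUnion htT ⟨m, ?_, hψeq⟩
      intro i _
      simp only [Set.mem_setOf_eq]
      rw [add_assoc, hmdef, hwt i.1 i.2]
      exact hbox i.1 i.2
    · intro hw
      rw [Set.mem_iUnion₂] at hw
      obtain ⟨t, ht, m, hm, rfl⟩ := hw
      exact hψW t ht m hm
  have hfib_fin : ∀ (t : Zd d) (i : {i : Fin d // i ≠ 0}),
      {m : ℤ | |c i.1 + t i.1 + Q * m| ≤ n}.Finite := by
    intro t i
    exact fiber_finite Q (c i.1 + t i.1) n hQ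
  have hPfin : ∀ t : Zd d, (P t).Finite := by
    intro t
    exact Set.Finite.pi (fun i => hfib_fin t i)
  have hψinj : ∀ t : Zd d, Function.Injective (ψ t) := by
    intro t m m' h
    funext i
    have hi := congrFun h i.1
    show m i = m' i
    simp only [hψ, hext, dif_neg i.2] at hi
    have : Q * m ⟨i.1, i.2⟩ = Q * m' ⟨i.1, i.2⟩ := by linarith
    have := mul_left_cancel₀ hQne this
    simpa using this
  have hdisj : ∀ t ∈ TT vb, ∀ t' ∈ TT vb, t ≠ t' → Disjoint (ψ t '' P t) (ψ t' '' P t') := by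
    intro t ht t' ht' hne'
    rw [Set.disjoint_left]
    rintro x ⟨m, _, rfl⟩ ⟨m', _, hx'⟩
    apply hne'
    obtain ⟨hbnd, _, ht0⟩ := (mem_TT vb t).mp ht
    obtain ⟨hbnd', _, ht0'⟩ := (mem_TT vb t').mp ht'
    have key : ∀ (s : Zd d) (mm : {i : Fin d // i ≠ 0} → ℤ) (i : Fin d) (hi : i ≠ 0),
        (0 ≤ s i ∧ s i ≤ Q - 1) → s i = (ψ s mm) i % Q := by
      intro s mm i hi hb
      show s i = (s i + Q * ext mm i) % Q
      rw [show s i + Q * ext mm i = s i + (ext mm i) * Q by ring, Int.add_mul_emod_self_right]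
      exact (Int.emod_eq_of_lt hb.1 (by omega)).symm
    funext i
    by_cases h : i = 0
    · subst h; rw [ht0, ht0']
    · rw [key t m i h (hbnd i), key t' m' i h (hbnd' i), hx']
  rw [hS] at h1
  rw [h1, hWU, ncard_biUnion_finset _ _ (fun t _ => (hPfin t).image _) hdisj]
  apply Finset.sum_congr rfl
  intro t ht
  rw [Set.ncard_image_of_injective _ (hψinj t)]
  have hPcard : (P t).ncard = ∏ i : {i : Fin d // i ≠ 0},
      {m : ℤ | |c i.1 + t i.1 + Q * m| ≤ n}.ncard := by
    rw [← Nat.card_coe_set_eq, hP]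
    rw [Nat.card_congr (Equiv.Set.univPi (fun i : {i : Fin d // i ≠ 0} => {m : ℤ | |c i.1 + t i.1 + Q * m| ≤ n}))]
    rw [Nat.card_pi]
    exact Finset.prod_congr rfl fun i _ => Nat.card_coe_set_eq _
  rw [hPcard]
  apply Finset.prod_congr rfl
  intro i _
  rw [hndef]
  exact count_fiber Q (c i.1 + t i.1) hQ k



theorem slice_count_limit {d : ℕ} [NeZero d] (vb : Fin d → Zd d)
    (hne : ∀ i, vb i ≠ 0)
    (horth : ∀ i j, i ≠ j → innerZ (vb i) (vb j) = 0)
    (v : Zd d) (hv : v = vb 0) :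
    ∃ (nk : ℕ → ℕ) (K : ℝ), StrictMono nk ∧ (∀ k, 0 < nk k) ∧ 0 < K ∧
      ∀ r : ℤ, (∃ u : Zd d, innerZ u v = r) →
        Tendsto (fun k : ℕ => ((nk k : ℝ)) ^ ((1 : ℤ) - (d : ℤ)) *
            (Set.ncard {u : Zd d |
              (∀ i, |innerZ u (vb i)| ≤ ((nk k : ℕ) : ℤ)) ∧ innerZ u v = r} : ℝ))
          atTop (𝓝 K) := by
  classical
  subst hv
  set Q : ℤ := Qv vb with hQdef
  have hQ : 0 < Q := Qv_pos vb hne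
  have hQR : (0:ℝ) < (Q:ℝ) := by exact_mod_cast hQ
  have hQ1 : 1 ≤ Q.toNat := by omega
  have hd1 : 1 ≤ d := Nat.one_le_iff_ne_zero.mpr (NeZero.ne d)
  have hcard2 : Fintype.card {i : Fin d // i ≠ 0} = d - 1 := by
    rw [Fintype.card_subtype_compl, Fintype.card_subtype_eq, Fintype.card_fin]
  refine ⟨fun k => (k+1) * Q.toNat, ((TT vb).card : ℝ) * (2 / (Q:ℝ))^(d-1),
    ?_, ?_, ?_, ?_⟩
  · intro a b hab
    exact Nat.mul_lt_mul_of_lt_of_le (by omega) (le_refl _) (by omega)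
  · intro k
    exact Nat.mul_pos (by omega) (by omega)
  · have hcard : 0 < (TT vb).card := Finset.card_pos.mpr (TT_nonempty vb hne)
    apply mul_pos
    · exact_mod_cast hcard
    · exact pow_pos (by positivity) _
  · intro r hr
    obtain ⟨ur, hur⟩ := hr
    set c : Zd d := (matA vb).mulVec ur with hc
    have hc0 : c 0 = r := by
      rw [hc, ← innerZ_mulVec vb ur 0, hur]
    have hnkZ : ∀ k : ℕ, (((k+1) * Q.toNat : ℕ) : ℤ) = ((k:ℤ)+1) * Q := by
      intro k
      push_cast [Int.toNat_of_nonneg hQ.le]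
      ring
    have hnkR : ∀ k : ℕ, (((k+1) * Q.toNat : ℕ) : ℝ) = ((k:ℝ)+1) * (Q:ℝ) := by
      intro k
      have := hnkZ k
      push_cast at this ⊢
      exact_mod_cast this
    set g : ℕ → ℝ := fun k => ∑ t ∈ TT vb, ∏ i : {i : Fin d // i ≠ 0},
        ((2*((k:ℝ)+1) + 1 + ((epsQ vb (c i.1 + t i.1) : ℤ) : ℝ)) / (((k:ℝ)+1) * (Q:ℝ)))
      with hg
    have hlimg : Tendsto g atTop (𝓝 (((TT vb).card : ℝ) * (2 / (Q:ℝ))^(d-1))) := by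
      have hKsum : ((TT vb).card : ℝ) * (2 / (Q:ℝ))^(d-1)
          = ∑ _t ∈ TT vb, ∏ _i : {i : Fin d // i ≠ 0}, (2/(Q:ℝ)) := by
        rw [Finset.prod_const, Finset.card_univ, hcard2, Finset.sum_const, nsmul_eq_mul]
      rw [hKsum, hg]
      apply tendsto_finset_sum
      intro t _
      apply tendsto_finset_prod
      intro i _
      set e : ℝ := ((epsQ vb (c i.1 + t i.1) : ℤ) : ℝ) with he
      have hrw : ∀ k : ℕ, (2*((k:ℝ)+1) + 1 + e) / (((k:ℝ)+1) * (Q:ℝ))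
          = 2/(Q:ℝ) + ((1+e)/(Q:ℝ)) * (1/((k:ℝ)+1)) := by
        intro k
        have hk0 : ((k:ℝ)+1) ≠ 0 := by positivity
        field_simp
        ring
      have h2 : Tendsto (fun k : ℕ => 2/(Q:ℝ) + ((1+e)/(Q:ℝ)) * (1/((k:ℝ)+1)))
          atTop (𝓝 (2/(Q:ℝ) + ((1+e)/(Q:ℝ)) * 0)) :=
        tendsto_const_nhds.add (tendsto_const_nhds.mul tendsto_one_div_add_atTop_nhds_zero_nat)
      simp only [mul_zero, add_zero] at h2
      exact h2.congr (fun k => (hrw k).symm)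
    apply hlimg.congr'
    rw [Filter.eventuallyEq_iff_exists_mem]
    refine ⟨{k | |r|.toNat ≤ k}, Filter.mem_atTop _, ?_⟩
    intro k hk
    simp only [Set.mem_setOf_eq] at hk
    have hkr : |r| ≤ ((k:ℤ)+1) * Q := by
      have h1 : |r| ≤ (k:ℤ) := by omega
      nlinarith
    have hcount := count_slice vb horth hne r c ⟨ur, rfl⟩ hc0 k hkr
    have hsets : {u : Zd d | (∀ i, |innerZ u (vb i)| ≤ (((k+1) * Q.toNat : ℕ):ℤ)) ∧ innerZ u (vb 0) = r}
        = {u : Zd d | (∀ i, |innerZ u (vb i)| ≤ ((k:ℤ)+1) * Q) ∧ innerZ u (vb 0) = r} := by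
      rw [hnkZ k]
    show g k = (((k+1) * Q.toNat : ℕ) : ℝ) ^ ((1:ℤ) - (d:ℤ)) *
      (Set.ncard {u : Zd d | (∀ i, |innerZ u (vb i)| ≤ (((k+1) * Q.toNat : ℕ) : ℤ)) ∧
        innerZ u (vb 0) = r} : ℝ)
    rw [hsets, hcount]
    -- cast the sum of products
    have hXnn : ∀ (t : Zd d) (i : {i : Fin d // i ≠ 0}),
        0 ≤ 2*((k:ℤ)+1) + 1 + epsQ vb (c i.1 + t i.1) := by
      intro t i
      have := (eps_bounds Q (c i.1 + t i.1) hQ).1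
      have hk0 : (0:ℤ) ≤ (k:ℤ) := Int.ofNat_nonneg k
      simp only [epsQ, ← hQdef] at *
      linarith
    have hcast : ((∑ t ∈ TT vb, ∏ i : {i : Fin d // i ≠ 0},
        (2*((k:ℤ)+1) + 1 + epsQ vb (c i.1 + t i.1)).toNat : ℕ) : ℝ)
        = ∑ t ∈ TT vb, ∏ i : {i : Fin d // i ≠ 0},
          ((2*((k:ℤ)+1) + 1 + epsQ vb (c i.1 + t i.1) : ℤ) : ℝ) := by
      push_cast
      apply Finset.sum_congr rfl
      intro t _
      apply Finset.prod_congr rfl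
      intro i _
      rw [← Int.cast_natCast, Int.toNat_of_nonneg (hXnn t i)]
      push_cast
      ring
    rw [hcast, hnkR k]
    -- now pure algebra
    set x : ℝ := ((k:ℝ)+1) * (Q:ℝ) with hx
    have hx0 : (0:ℝ) < x := by positivity
    have hdz : ((1:ℤ) - (d:ℤ)) = -((d-1 : ℕ) : ℤ) := by
      rw [Nat.cast_sub hd1]
      ring
    have hzpow : x ^ ((1:ℤ) - (d:ℤ)) = (x ^ (d-1 : ℕ))⁻¹ := by
      rw [hdz, _root_.zpow_neg, zpow_natCast]
    rw [hzpow, hg]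
    rw [Finset.mul_sum]
    apply Finset.sum_congr rfl
    intro t _
    rw [Finset.prod_div_distrib, Finset.prod_const, Finset.card_univ, hcard2, div_eq_inv_mul]
    congr 1
    apply Finset.prod_congr rfl
    intro i _
    push_cast
    ring

end main

end ExclusionPaper
end
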